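/- Let n, m be positive integers, let f̂ : ℝⁿ × ℝᵐ → ℝⁿ and δ : ℝⁿ × ℝᵐ → ℝⁿ be continuous with δ ≥ 0 componentwise, define 𝕏₊(w) = Icc(f̂(w) − δ(w), f̂(w) + δ(w)), and let L : ℝⁿ → ℝ be continuous. Let 𝕎_cons ⊆ ℝⁿ × ℝᵐ be compact, let α > 0, and define the robust negative-definite set 𝕎_N = { (x,u) ∈ 𝕎_cons : ∀ x₊ ∈ 𝕏₊(x,u), L(x₊) − L(x) ≤ −α }. For 𝕎 ⊆ ℝⁿ × ℝᵐ define ℐ(𝕎) = { w ∈ 𝕎 : 𝕏₊(w) ⊆ proj(𝕎) } and ℐ^∞(𝕎) = ⋂_{i ≥ 1} ℐ^i(𝕎). Then 𝕊 = ℐ^∞(𝕎_N) satisfies both defining properties of the robust negative-definite and invariant set: (i) for every w ∈ 𝕊, 𝕏₊(w) ⊆ proj(𝕊), and (ii) for every (x,u) ∈ 𝕊 and every x₊ ∈ 𝕏₊(x,u), L(x₊) − L(x) ≤ −α. -/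

import Mathlib

open Set Filter Topology

/-- The set of possible next states: the componentwise box
`Icc (f̂(w) - δ(w)) (f̂(w) + δ(w))`. -/
def nextSet {n m : ℕ} (fhat del : (Fin n → ℝ) × (Fin m → ℝ) → Fin n → ℝ)
    (w : (Fin n → ℝ) × (Fin m → ℝ)) : Set (Fin n → ℝ) :=
  Set.Icc (fhat w - del w) (fhat w + del w)

/-- Projection of a subset of the state-control space onto the state component. -/
def proj {n m : ℕ} (W : Set ((Fin n → ℝ) × (Fin m → ℝ))) : Set (Fin n → ℝ) :=
  Prod.fst '' W

/-- The mapping `ℐ(𝕎) = { w ∈ 𝕎 : 𝕏₊(w) ⊆ proj 𝕎 }` (Definition 4). -/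
def Imap {n m : ℕ} (fhat del : (Fin n → ℝ) × (Fin m → ℝ) → Fin n → ℝ)
    (W : Set ((Fin n → ℝ) × (Fin m → ℝ))) : Set ((Fin n → ℝ) × (Fin m → ℝ)) :=
  {w ∈ W | nextSet fhat del w ⊆ proj W}

/-- `ℐ^∞(𝕎) = ⋂_{i ≥ 1} ℐ^i(𝕎)`. -/
def Iinf {n m : ℕ} (fhat del : (Fin n → ℝ) × (Fin m → ℝ) → Fin n → ℝ)
    (W : Set ((Fin n → ℝ) × (Fin m → ℝ))) : Set ((Fin n → ℝ) × (Fin m → ℝ)) :=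
  ⋂ i : ℕ, (Imap fhat del)^[i + 1] W

/-!
Every iterate `ℐ^i(𝕎_N)` is compact: the boxes `𝕏₊(w)` have continuous corners, so a condition
"for all `x₊ ∈ 𝕏₊(w)`" can be tested on the continuous clamps of each fixed point into the box,
and closed conditions stay closed. Given `w ∈ ℐ^∞(𝕎_N)` and `x ∈ 𝕏₊(w)`, the parts of the iterates
lying over `x` are therefore nested nonempty compact sets, and Cantor's intersection theorem yields
a point of `ℐ^∞(𝕎_N)` over `x`. The decrease of `L` is inherited from `ℐ^∞(𝕎_N) ⊆ 𝕎_N`.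
-/

open Function

theorem isClosed_setOf_forall_mem_Icc {X ι : Type*} [TopologicalSpace X] {a b : X → ι → ℝ}
    (ha : Continuous a) (hb : Continuous b) (hab : a ≤ b) {C : Set (X × (ι → ℝ))}
    (hC : IsClosed C) : IsClosed {w | ∀ y ∈ Icc (a w) (b w), (w, y) ∈ C} := by
  set clamp : X → (ι → ℝ) → ι → ℝ := fun w y => a w ⊔ (y ⊓ b w)
  have clamp_mem : ∀ w y, clamp w y ∈ Icc (a w) (b w) :=
    fun w y => ⟨le_sup_left, sup_le (hab w) inf_le_right⟩
  have clamp_eq : ∀ w, ∀ y ∈ Icc (a w) (b w), clamp w y = y := fun w y hy => by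
    simp only [clamp, inf_eq_left.2 hy.2, sup_eq_right.2 hy.1]
  have clamp_continuous : ∀ y, Continuous fun w => clamp w y := fun y =>
    continuous_pi fun j => ((continuous_apply j).comp ha).max
      (continuous_const.min ((continuous_apply j).comp hb))
  have hrepr : {w | ∀ y ∈ Icc (a w) (b w), (w, y) ∈ C} =
      ⋂ y, (fun w => (w, clamp w y)) ⁻¹' C := by
    ext w
    simp only [mem_iInter, mem_preimage]
    exact ⟨fun h y => h _ (clamp_mem w y), fun h y hy => clamp_eq w y hy ▸ h y⟩
  rw [hrepr]
  exact isClosed_iInter fun y => hC.preimage (continuous_id.prodMk (clamp_continuous y))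

section Imap

variable {n m : ℕ} {fhat del : (Fin n → ℝ) × (Fin m → ℝ) → Fin n → ℝ}
  {W : Set ((Fin n → ℝ) × (Fin m → ℝ))}

theorem isClosed_setOf_forall_nextSet (hfc : Continuous fhat) (hdc : Continuous del)
    (hd0 : ∀ w, (0 : Fin n → ℝ) ≤ del w) {C : Set (((Fin n → ℝ) × (Fin m → ℝ)) × (Fin n → ℝ))}
    (hC : IsClosed C) : IsClosed {w | ∀ y ∈ nextSet fhat del w, (w, y) ∈ C} :=
  isClosed_setOf_forall_mem_Icc (hfc.sub hdc) (hfc.add hdc)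
    (fun w => (sub_le_self _ (hd0 w)).trans (le_add_of_nonneg_right (hd0 w))) hC

theorem isCompact_Imap (hfc : Continuous fhat) (hdc : Continuous del)
    (hd0 : ∀ w, (0 : Fin n → ℝ) ≤ del w) (hW : IsCompact W) : IsCompact (Imap fhat del W) :=
  hW.inter_right <| isClosed_setOf_forall_nextSet hfc hdc hd0 <|
    (hW.image continuous_fst).isClosed.preimage continuous_snd

theorem isCompact_iterate_Imap (hfc : Continuous fhat) (hdc : Continuous del)
    (hd0 : ∀ w, (0 : Fin n → ℝ) ≤ del w) (hW : IsCompact W) (i : ℕ) :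
    IsCompact ((Imap fhat del)^[i] W) := by
  induction i with
  | zero => exact hW
  | succ i ih =>
    rw [iterate_succ_apply']
    exact isCompact_Imap hfc hdc hd0 ih

variable (fhat del W)

theorem Imap_subset : Imap fhat del W ⊆ W := fun _ hw => hw.1

theorem antitone_iterate_Imap : Antitone fun i => (Imap fhat del)^[i] W :=
  antitone_nat_of_succ_le fun i => by
    rw [iterate_succ_apply']
    exact Imap_subset _ _ _

theorem Iinf_subset : Iinf fhat del W ⊆ W :=
  fun _ hw => Imap_subset _ _ _ (by simpa using mem_iInter.1 hw 0)

variable {fhat del W}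

theorem nextSet_subset_proj_Iinf (hK : ∀ i, IsCompact ((Imap fhat del)^[i] W))
    {w : (Fin n → ℝ) × (Fin m → ℝ)} (hw : w ∈ Iinf fhat del W) :
    nextSet fhat del w ⊆ proj (Iinf fhat del W) := by
  intro x hx
  set t : ℕ → Set ((Fin n → ℝ) × (Fin m → ℝ)) :=
    fun i => (Imap fhat del)^[i + 1] W ∩ Prod.fst ⁻¹' {x}
  have ht_nonempty : ∀ i, (t i).Nonempty := fun i => by
    have hw' : w ∈ Imap fhat del ((Imap fhat del)^[i + 1] W) := by
      rw [← iterate_succ_apply' (Imap fhat del)]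
      exact mem_iInter.1 hw (i + 1)
    obtain ⟨p, hp, rfl⟩ := hw'.2 hx
    exact ⟨p, hp, rfl⟩
  have ht_compact : ∀ i, IsCompact (t i) :=
    fun i => (hK (i + 1)).inter_right (isClosed_singleton.preimage continuous_fst)
  have ht_antitone : ∀ i, t (i + 1) ⊆ t i :=
    fun i => inter_subset_inter_left _ (antitone_iterate_Imap _ _ _ (Nat.le_succ _))
  obtain ⟨p, hp⟩ := IsCompact.nonempty_iInter_of_sequence_nonempty_isCompact_isClosed t
    ht_antitone ht_nonempty (ht_compact 0) fun i => (ht_compact i).isClosed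
  rw [mem_iInter] at hp
  exact ⟨p, mem_iInter.2 fun i => (hp i).1, (hp 0).2⟩

end Imap

theorem isCompact_setOf_forall_nextSet_sub_le {n m : ℕ}
    {fhat del : (Fin n → ℝ) × (Fin m → ℝ) → Fin n → ℝ} (hfc : Continuous fhat)
    (hdc : Continuous del) (hd0 : ∀ w, (0 : Fin n → ℝ) ≤ del w) {L : (Fin n → ℝ) → ℝ}
    (hLc : Continuous L) {Wcons : Set ((Fin n → ℝ) × (Fin m → ℝ))} (hWcons : IsCompact Wcons)
    (c : ℝ) : IsCompact {w ∈ Wcons | ∀ xp ∈ nextSet fhat del w, L xp - L w.1 ≤ c} :=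
  hWcons.inter_right <| isClosed_setOf_forall_nextSet hfc hdc hd0 (C := {p | L p.2 - L p.1.1 ≤ c})
    (isClosed_le (by fun_prop) continuous_const)

theorem stmt9_general {n m : ℕ}
    (fhat del : (Fin n → ℝ) × (Fin m → ℝ) → Fin n → ℝ)
    (hfc : Continuous fhat) (hdc : Continuous del)
    (hd0 : ∀ w, (0 : Fin n → ℝ) ≤ del w)
    (L : (Fin n → ℝ) → ℝ) (hLc : Continuous L)
    (Wcons : Set ((Fin n → ℝ) × (Fin m → ℝ))) (hWcons : IsCompact Wcons)
    (α : ℝ)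
    (WN : Set ((Fin n → ℝ) × (Fin m → ℝ)))
    (hWN : WN = {w ∈ Wcons | ∀ xp ∈ nextSet fhat del w, L xp - L w.1 ≤ -α}) :
    (∀ w ∈ Iinf fhat del WN,
        nextSet fhat del w ⊆ proj (Iinf fhat del WN)) ∧
      (∀ w ∈ Iinf fhat del WN,
        ∀ xp ∈ nextSet fhat del w, L xp - L w.1 ≤ -α) := by
  have hWNc : IsCompact WN :=
    hWN ▸ isCompact_setOf_forall_nextSet_sub_le hfc hdc hd0 hLc hWcons (-α)
  refine ⟨fun w hw => nextSet_subset_proj_Iinf (isCompact_iterate_Imap hfc hdc hd0 hWNc) hw,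
    fun w hw => ?_⟩
  have hwWN := Iinf_subset fhat del WN hw
  rw [hWN] at hwWN
  exact hwWN.2

theorem stmt9 {n m : ℕ} (hn : 0 < n) (hm : 0 < m)
    (fhat del : (Fin n → ℝ) × (Fin m → ℝ) → Fin n → ℝ)
    (hfc : Continuous fhat) (hdc : Continuous del)
    (hd0 : ∀ w, (0 : Fin n → ℝ) ≤ del w)
    (L : (Fin n → ℝ) → ℝ) (hLc : Continuous L)
    (Wcons : Set ((Fin n → ℝ) × (Fin m → ℝ))) (hWcons : IsCompact Wcons)
    (α : ℝ) (hα : 0 < α)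
    (WN : Set ((Fin n → ℝ) × (Fin m → ℝ)))
    (hWN : WN = {w ∈ Wcons | ∀ xp ∈ nextSet fhat del w, L xp - L w.1 ≤ -α}) :
    (∀ w ∈ Iinf fhat del WN,
        nextSet fhat del w ⊆ proj (Iinf fhat del WN)) ∧
      (∀ w ∈ Iinf fhat del WN,
        ∀ xp ∈ nextSet fhat del w, L xp - L w.1 ≤ -α) :=
  stmt9_general fhat del hfc hdc hd0 L hLc Wcons hWcons α WN hWN
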